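/- Let d ≥ 1. There exists a constant C = C(d) > 0 such that for all 0 < t ≤ t' and every w ∈ ℝ^d, |p_t(w) − p_{t'}(w)| ≤ C t^{-1} (t'−t) ( p_t(w) + p_{2t'}(w) ). -/

import Mathlib

open Real MeasureTheory

/-- The `d`-dimensional heat kernel `p_t(x) = (2πt)^{-d/2} exp(-|x|²/(2t))`. -/
noncomputable def heatKernel (d : ℕ) (t : ℝ) (x : EuclideanSpace ℝ (Fin d)) : ℝ :=
  (2 * Real.pi * t) ^ (-(d : ℝ) / 2) * Real.exp (-‖x‖ ^ 2 / (2 * t))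

/-!
Write `p_t = A_t E_t` with prefactor `A_t = (2πt)^{-d/2}` (decreasing in `t`) and Gaussian factor
`E_t = exp(-|w|²/(2t))` (increasing in `t`), and put `δ = (t' - t)/t`. Then
`|p_t - p_{t'}| ≤ (A_t - A_{t'}) E_{t'} + A_t (E_{t'} - E_t)`. From `1 - e^{-y} ≤ y` and `log r ≤ r - 1`
one gets `A_t - A_{t'} ≤ (d/2) δ A_t`, and from `x e^{-x} ≤ 2 e^{-x/2}` one gets
`E_{t'} - E_t ≤ 2 δ E_{2t'}`, so `|p_t - p_{t'}| ≤ (d/2 + 2) δ A_t E_{2t'}`.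
If `t' ≤ 2t`, then `A_t ≤ 4^{d/2} A_{2t'}` and this is the claim. If `t' > 2t`, then `δ ≥ 1` and the
trivial bound `|p_t - p_{t'}| ≤ p_t + p_{t'} ≤ p_t + 4^{d/2} p_{2t'}` suffices.
-/

lemma rpow_neg_sub_rpow_neg_le {u v c : ℝ} (hu : 0 < u) (huv : u ≤ v) (hc : 0 ≤ c) :
    u ^ (-c) - v ^ (-c) ≤ c * ((v - u) / u) * u ^ (-c) := by
  have hv : 0 < v := hu.trans_le huv
  have hsplit : v ^ (-c) = u ^ (-c) * (v / u) ^ (-c) := by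
    rw [← mul_rpow hu.le (div_pos hv hu).le, mul_div_cancel₀ _ hu.ne']
  have hratio : 1 - c * ((v - u) / u) ≤ (v / u) ^ (-c) := by
    have hlog : log (v / u) ≤ (v - u) / u := by
      rw [sub_div, div_self hu.ne']
      exact log_le_sub_one_of_pos (div_pos hv hu)
    rw [rpow_def_of_pos (div_pos hv hu), mul_neg, mul_comm (log _)]
    calc 1 - c * ((v - u) / u) ≤ 1 - c * log (v / u) := by gcongr
      _ ≤ exp (-(c * log (v / u))) := one_sub_le_exp_neg _
  calc u ^ (-c) - v ^ (-c) = u ^ (-c) * (1 - (v / u) ^ (-c)) := by rw [hsplit]; ring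
    _ ≤ u ^ (-c) * (c * ((v - u) / u)) := by
        gcongr
        linarith
    _ = c * ((v - u) / u) * u ^ (-c) := by ring

lemma mul_exp_neg_le_two_mul_exp_neg_half (x : ℝ) :
    x * exp (-x) ≤ 2 * exp (-(x / 2)) := by
  have hle : x / 2 ≤ exp (x / 2) := by linarith [add_one_le_exp (x / 2)]
  calc x * exp (-x) = 2 * (x / 2 * exp (-(x / 2))) * exp (-(x / 2)) := by
        rw [show -x = -(x / 2) + -(x / 2) by ring, exp_add]
        ring
    _ ≤ 2 * (exp (x / 2) * exp (-(x / 2))) * exp (-(x / 2)) := by gcongr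
    _ = 2 * exp (-(x / 2)) := by rw [← exp_add, add_neg_cancel, exp_zero, mul_one]

lemma exp_neg_div_le_exp_neg_div {a s t : ℝ} (ha : 0 ≤ a) (hs : 0 < s) (hst : s ≤ t) :
    exp (-a / s) ≤ exp (-a / t) := by
  rw [exp_le_exp, neg_div, neg_div, neg_le_neg_iff]
  exact div_le_div_of_nonneg_left ha hs hst

lemma exp_neg_div_sub_exp_neg_div_le {a t t' : ℝ} (ht : 0 < t) (htt' : t ≤ t') :
    exp (-a / (2 * t')) - exp (-a / (2 * t)) ≤
      2 * ((t' - t) / t) * exp (-a / (2 * (2 * t'))) := by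
  have ht' : 0 < t' := ht.trans_le htt'
  set x := a / (2 * t') with hx
  set y := x * ((t' - t) / t) with hy
  have hδ : 0 ≤ (t' - t) / t := div_nonneg (sub_nonneg.2 htt') ht.le
  have hsplit : exp (-a / (2 * t)) = exp (-x) * exp (-y) := by
    rw [← exp_add, hy, hx]
    congr 1
    field_simp
    ring
  have hhalf : -a / (2 * (2 * t')) = -(x / 2) := by
    rw [hx]
    field_simp
  calc exp (-a / (2 * t')) - exp (-a / (2 * t)) = exp (-x) * (1 - exp (-y)) := by
        rw [hsplit, neg_div]
        ring
    _ ≤ exp (-x) * y := by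
        gcongr
        linarith [one_sub_le_exp_neg y]
    _ = x * exp (-x) * ((t' - t) / t) := by ring
    _ ≤ 2 * exp (-(x / 2)) * ((t' - t) / t) :=
        mul_le_mul_of_nonneg_right (mul_exp_neg_le_two_mul_exp_neg_half x) hδ
    _ = 2 * ((t' - t) / t) * exp (-a / (2 * (2 * t'))) := by rw [hhalf]; ring

lemma abs_mul_sub_mul_le {A A' E E' : ℝ} (hA' : A' ≤ A) (hE : E ≤ E') (hA : 0 ≤ A)
    (hE' : 0 ≤ E') : |A * E - A' * E'| ≤ (A - A') * E' + A * (E' - E) := by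
  rw [abs_le]
  constructor <;> nlinarith

lemma heatKernel_nonneg (d : ℕ) {t : ℝ} (ht : 0 ≤ t) (x : EuclideanSpace ℝ (Fin d)) :
    0 ≤ heatKernel d t x := by
  unfold heatKernel
  positivity

lemma abs_heatKernel_sub_heatKernel_le (d : ℕ) {t t' : ℝ} (ht : 0 < t) (htt' : t ≤ t')
    (x : EuclideanSpace ℝ (Fin d)) :
    |heatKernel d t x - heatKernel d t' x| ≤
      ((d : ℝ) / 2 + 2) * ((t' - t) / t) *
        ((2 * π * t) ^ (-(d : ℝ) / 2) * exp (-‖x‖ ^ 2 / (2 * (2 * t')))) := by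
  have ht' : 0 < t' := ht.trans_le htt'
  have hδ : 0 ≤ (t' - t) / t := div_nonneg (sub_nonneg.2 htt') ht.le
  have hu : 0 < 2 * π * t := by positivity
  have huv : 2 * π * t ≤ 2 * π * t' := by gcongr
  have hc : 0 ≤ (d : ℝ) / 2 := by positivity
  have hprefactor : (2 * π * t) ^ (-((d : ℝ) / 2)) - (2 * π * t') ^ (-((d : ℝ) / 2)) ≤
      (d : ℝ) / 2 * ((t' - t) / t) * (2 * π * t) ^ (-((d : ℝ) / 2)) := by
    have h := rpow_neg_sub_rpow_neg_le hu huv hc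
    rwa [← mul_sub, mul_div_mul_left _ _ (by positivity : 2 * π ≠ 0)] at h
  have hgauss := exp_neg_div_sub_exp_neg_div_le (a := ‖x‖ ^ 2) ht htt'
  have hmono : exp (-‖x‖ ^ 2 / (2 * t')) ≤ exp (-‖x‖ ^ 2 / (2 * (2 * t'))) :=
    exp_neg_div_le_exp_neg_div (sq_nonneg _) (by positivity) (by linarith)
  unfold heatKernel
  rw [neg_div 2 (d : ℝ)]
  calc _ ≤ ((2 * π * t) ^ (-((d : ℝ) / 2)) - (2 * π * t') ^ (-((d : ℝ) / 2))) *
          exp (-‖x‖ ^ 2 / (2 * t')) +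
        (2 * π * t) ^ (-((d : ℝ) / 2)) *
          (exp (-‖x‖ ^ 2 / (2 * t')) - exp (-‖x‖ ^ 2 / (2 * t))) :=
        abs_mul_sub_mul_le (rpow_le_rpow_of_nonpos hu huv (by linarith))
          (exp_neg_div_le_exp_neg_div (sq_nonneg _) (by positivity) (by linarith))
          (by positivity) (exp_nonneg _)
    _ ≤ (d : ℝ) / 2 * ((t' - t) / t) * (2 * π * t) ^ (-((d : ℝ) / 2)) *
          exp (-‖x‖ ^ 2 / (2 * (2 * t'))) +
        (2 * π * t) ^ (-((d : ℝ) / 2)) *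
          (2 * ((t' - t) / t) * exp (-‖x‖ ^ 2 / (2 * (2 * t')))) := by
        gcongr
    _ = _ := by ring

lemma rpow_mul_exp_le_heatKernel (d : ℕ) {s s' : ℝ} (hs : 0 < s) (hs' : 0 < s')
    (hss' : s' ≤ 4 * s) (x : EuclideanSpace ℝ (Fin d)) :
    (2 * π * s) ^ (-(d : ℝ) / 2) * exp (-‖x‖ ^ 2 / (2 * s')) ≤
      4 ^ ((d : ℝ) / 2) * heatKernel d s' x := by
  unfold heatKernel
  rw [← mul_assoc, neg_div 2 (d : ℝ)]
  gcongr
  have hc : 0 ≤ (d : ℝ) / 2 := by positivity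
  have hc' : (0 : ℝ) ≤ 4 ^ ((d : ℝ) / 2) := by positivity
  calc (2 * π * s) ^ (-((d : ℝ) / 2))
        = 4 ^ ((d : ℝ) / 2) * (4 * (2 * π * s)) ^ (-((d : ℝ) / 2)) := by
        rw [mul_rpow (x := 4) (by norm_num) (by positivity), rpow_neg (x := 4) (by norm_num),
          ← mul_assoc, mul_inv_cancel₀ (by positivity), one_mul]
    _ ≤ 4 ^ ((d : ℝ) / 2) * (2 * π * s') ^ (-((d : ℝ) / 2)) := by
        refine mul_le_mul_of_nonneg_left (rpow_le_rpow_of_nonpos (by positivity) ?_ ?_) hc'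
        · nlinarith [pi_pos]
        · linarith

theorem heatKernel_time_difference_pointwise_bound_general
    (d : ℕ) :
    ∃ C : ℝ, 0 < C ∧ ∀ (t t' : ℝ), 0 < t → t ≤ t' → ∀ w : EuclideanSpace ℝ (Fin d),
      |heatKernel d t w - heatKernel d t' w|
        ≤ C * t⁻¹ * (t' - t) * (heatKernel d t w + heatKernel d (2 * t') w) := by
  refine ⟨((d : ℝ) / 2 + 2) * 4 ^ ((d : ℝ) / 2), by positivity, ?_⟩
  intro t t' ht htt' w
  have ht' : 0 < t' := ht.trans_le htt'
  have hp := heatKernel_nonneg d ht.le w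
  have hp₂ := heatKernel_nonneg d (by positivity : (0 : ℝ) ≤ 2 * t') w
  have hδ : 0 ≤ (t' - t) / t := div_nonneg (sub_nonneg.2 htt') ht.le
  rw [mul_assoc _ t⁻¹, inv_mul_eq_div]
  rcases le_or_gt t' (2 * t) with hnear | hfar
  · calc _ ≤ _ := abs_heatKernel_sub_heatKernel_le d ht htt' w
      _ ≤ ((d : ℝ) / 2 + 2) * ((t' - t) / t) * (4 ^ ((d : ℝ) / 2) * heatKernel d (2 * t') w) := by
          gcongr _ * ?_
          exact rpow_mul_exp_le_heatKernel d ht (by positivity) (by linarith) w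
      _ ≤ _ := by
          rw [← mul_assoc, mul_right_comm _ _ (4 ^ _)]
          gcongr _ * ?_
          exact le_add_of_nonneg_left hp
  · have hpt' := heatKernel_nonneg d ht'.le w
    have hδ₁ : 1 ≤ (t' - t) / t := by rw [le_div_iff₀ ht]; linarith
    have hp' : heatKernel d t' w ≤ 4 ^ ((d : ℝ) / 2) * heatKernel d (2 * t') w :=
      (mul_le_mul_of_nonneg_left (exp_neg_div_le_exp_neg_div (sq_nonneg _) (by positivity)
        (by linarith)) (by positivity)).trans
        (rpow_mul_exp_le_heatKernel d ht' (by positivity) (by linarith) w)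
    have h4 : (1 : ℝ) ≤ 4 ^ ((d : ℝ) / 2) := one_le_rpow (by norm_num) (by positivity)
    have hC : 4 ^ ((d : ℝ) / 2) ≤ ((d : ℝ) / 2 + 2) * 4 ^ ((d : ℝ) / 2) :=
      le_mul_of_one_le_left (by positivity) (by linarith [(by positivity : (0 : ℝ) ≤ d / 2)])
    calc _ ≤ heatKernel d t w + heatKernel d t' w :=
          abs_sub_le_of_nonneg_of_le hp (le_add_of_nonneg_right hpt') hpt'
            (le_add_of_nonneg_left hp)
      _ ≤ ((d : ℝ) / 2 + 2) * 4 ^ ((d : ℝ) / 2) * (heatKernel d t w + heatKernel d (2 * t') w) := by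
          linarith [mul_le_mul_of_nonneg_right (h4.trans hC) hp,
            mul_le_mul_of_nonneg_right hC hp₂]
      _ ≤ _ := by
          rw [mul_assoc _ ((t' - t) / t)]
          exact mul_le_mul_of_nonneg_left (le_mul_of_one_le_left (by positivity) hδ₁)
            (by positivity)

/-- There is `C = C(d) > 0` such that for all `0 < t ≤ t'` and `w ∈ ℝ^d`,
`|p_t(w) − p_{t'}(w)| ≤ C t⁻¹ (t'−t) (p_t(w) + p_{2t'}(w))`. -/
theorem heatKernel_time_difference_pointwise_bound
    (d : ℕ) (hd : 1 ≤ d) :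
    ∃ C : ℝ, 0 < C ∧ ∀ (t t' : ℝ), 0 < t → t ≤ t' → ∀ w : EuclideanSpace ℝ (Fin d),
      |heatKernel d t w - heatKernel d t' w|
        ≤ C * t⁻¹ * (t' - t) * (heatKernel d t w + heatKernel d (2 * t') w) :=
  heatKernel_time_difference_pointwise_bound_general d
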